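/- Let (X_i, x_i⁰, d^i) be a sequence of pointed, proper metric spaces converging to a pointed proper metric space (Y, y₀, d^Y) in the pointed Gromov–Hausdorff sense, and let Z be a compact metric space. Then every equicontinuous sequence of maps g_i : X_i → Z has a subsequence that converges to a continuous map g : Y → Z. -/
import Mathlib


open Filter Set Metric
open scoped Topology

/-- A metric `δ` on the disjoint union `X ⊕ Y` of two metric spaces whose
restrictions to `X` and to `Y` are the given metrics, as used to witness pointed
Gromov–Hausdorff convergence (condition (a) of the paper). -/
structure GlueMetric (X Y : Type) [MetricSpace X] [MetricSpace Y] where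
  /-- the distance function on the disjoint union -/
  d : X ⊕ Y → X ⊕ Y → ℝ
  self : ∀ a, d a a = 0
  pos : ∀ a b, a ≠ b → 0 < d a b
  symm : ∀ a b, d a b = d b a
  triangle : ∀ a b c, d a c ≤ d a b + d b c
  /-- the inclusion `(X, dˣ) → (X ⊔ Y, δ)` is isometric -/
  left : ∀ x x' : X, d (.inl x) (.inl x') = dist x x'
  /-- the inclusion `(Y, dʸ) → (X ⊔ Y, δ)` is isometric -/
  right : ∀ y y' : Y, d (.inr y) (.inr y') = dist y y'

/-- **Proposition 11.3 (Arzelà–Ascoli for pointed Gromov–Hausdorff convergence).**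
Let `(X_i, x_i⁰, d^i)` be a sequence of pointed, proper metric spaces converging to
a pointed proper metric space `(Y, y₀, d^Y)` in the pointed Gromov–Hausdorff sense
— witnessed by metrics `δ_i` on the disjoint unions `X_i ⊔ Y` such that the
inclusions of `X_i` and `Y` are isometric and, for every `r > 0` and `ε > 0`, for
almost all `i`: `δ_i(x_i⁰, y₀) < ε`, `B(x_i⁰, r)` lies in the `ε`-neighbourhood of
`Y` and `B(y₀, r)` lies in the `ε`-neighbourhood of `X_i` — and let `Z` be a
compact metric space.  Then every equicontinuous sequence of maps `g_i : X_i → Z`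
has a subsequence that converges to a continuous map `g : Y → Z`, where
`g_i : X_i → Z` converges to `g : Y → Z` if `g_i(x_i) → g(y)` whenever the sequence
`x_i ∈ X_i` converges to `y ∈ Y` (i.e. `δ_i(x_i, y) → 0`). -/
theorem arzela_ascoli_gromov_hausdorff
    (X : ℕ → Type) [∀ i, MetricSpace (X i)] (x₀ : ∀ i, X i)
    (hXproper : ∀ i, ProperSpace (X i))
    (Y : Type) [MetricSpace Y] (y₀ : Y) (hYproper : ProperSpace Y)
    (Z : Type) [MetricSpace Z] (hZcompact : CompactSpace Z)
    (δ : ∀ i, GlueMetric (X i) Y)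
    (hGH : ∀ r > (0 : ℝ), ∀ ε > (0 : ℝ), ∀ᶠ i in atTop,
      (δ i).d (.inl (x₀ i)) (.inr y₀) < ε ∧
      (∀ x : X i, dist (x₀ i) x < r → ∃ y : Y, (δ i).d (.inl x) (.inr y) < ε) ∧
      (∀ y : Y, dist y₀ y < r → ∃ x : X i, (δ i).d (.inl x) (.inr y) < ε))
    (g : ∀ i, X i → Z)
    (hequi : ∀ r > (0 : ℝ), ∀ ε > (0 : ℝ), ∃ η > (0 : ℝ), ∀ i, ∀ x x' : X i,
      dist (x₀ i) x < r → dist (x₀ i) x' < r → dist x x' < η →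
      dist (g i x) (g i x') < ε) :
    ∃ φ : ℕ → ℕ, StrictMono φ ∧ ∃ G : Y → Z, Continuous G ∧
      ∀ (y : Y) (x : ∀ i, X (φ i)),
        Tendsto (fun i => (δ (φ i)).d (.inl (x i)) (.inr y)) atTop (𝓝 0) →
        Tendsto (fun i => g (φ i) (x i)) atTop (𝓝 (G y)) := by
    classical
  haveI := hYproper
  haveI := hZcompact
  haveI : Nonempty Y := ⟨y₀⟩
  haveI : ∀ i, Nonempty (X i) := fun i => ⟨x₀ i⟩
  -- nonnegativity of the glue metrics
  have dd_nonneg : ∀ i (a b : X i ⊕ Y), 0 ≤ (δ i).d a b := by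
    intro i a b
    have h := (δ i).triangle a b a
    rw [(δ i).self, (δ i).symm b a] at h
    linarith
  -- helper: a nonneg sequence eventually below every ε tends to 0
  have tendsto0 : ∀ f : ℕ → ℝ, (∀ i, 0 ≤ f i) →
      (∀ ε > (0:ℝ), ∀ᶠ i in atTop, f i < ε) → Tendsto f atTop (𝓝 0) := by
    intro f h0 h
    refine Metric.tendsto_atTop.2 fun ε hε => ?_
    obtain ⟨N, hN⟩ := eventually_atTop.1 (h ε hε)
    exact ⟨N, fun n hn => by
      rw [Real.dist_eq, sub_zero, abs_of_nonneg (h0 n)]; exact hN n hn⟩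
  -- base points converge
  have hbase : Tendsto (fun i => (δ i).d (.inl (x₀ i)) (.inr y₀)) atTop (𝓝 0) := by
    refine tendsto0 _ (fun i => dd_nonneg _ _ _) fun ε hε => ?_
    filter_upwards [hGH 1 one_pos ε hε] with i hi using hi.1
  -- a dense sequence in Y
  obtain ⟨D, hD⟩ := TopologicalSpace.exists_dense_seq Y
  -- for each n, choose points uₙᵢ ∈ Xᵢ converging to D n
  have hu : ∀ n : ℕ, ∃ u : ∀ i, X i,
      Tendsto (fun i => (δ i).d (.inl (u i)) (.inr (D n))) atTop (𝓝 0) := by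
    intro n
    have hbdd : ∀ i : ℕ, BddBelow (range fun x : X i => (δ i).d (.inl x) (.inr (D n))) :=
      fun i => ⟨0, by rintro _ ⟨x, rfl⟩; exact dd_nonneg _ _ _⟩
    have hchoose : ∀ i : ℕ, ∃ x : X i,
        (δ i).d (.inl x) (.inr (D n)) <
          (⨅ x : X i, (δ i).d (.inl x) (.inr (D n))) + 1/((i:ℝ)+1) := by
      intro i
      apply exists_lt_of_ciInf_lt
      have : (0:ℝ) < 1/((i:ℝ)+1) := by positivity
      linarith
    choose u hu using hchoose
    refine ⟨u, tendsto0 _ (fun i => dd_nonneg _ _ _) fun ε hε => ?_⟩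
    have h1 : ∀ᶠ i in atTop, (⨅ x : X i, (δ i).d (.inl x) (.inr (D n))) < ε/2 := by
      have hr : (0:ℝ) < dist y₀ (D n) + 1 := by positivity
      filter_upwards [hGH (dist y₀ (D n) + 1) hr (ε/2) (by linarith)] with i hi
      obtain ⟨x, hx⟩ := hi.2.2 (D n) (by linarith)
      exact lt_of_le_of_lt (ciInf_le (hbdd i) x) hx
    have h2 : ∀ᶠ i : ℕ in atTop, 1/((i:ℝ)+1) < ε/2 :=
      tendsto_one_div_add_atTop_nhds_zero_nat.eventually_lt_const (by linarith)
    filter_upwards [h1, h2] with i hi1 hi2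
    calc (δ i).d (.inl (u i)) (.inr (D n)) < _ + 1/((i:ℝ)+1) := hu i
      _ < ε := by linarith
  choose u hu using hu
  -- diagonal extraction using compactness of ℕ → Z
  obtain ⟨L, -, φ, hφ, haL⟩ :=
    isCompact_univ.tendsto_subseq (x := fun i (n : ℕ) => g i (u n i)) (fun i => mem_univ _)
  have hφat : Tendsto φ atTop atTop := hφ.tendsto_atTop
  have hGL : ∀ n : ℕ, Tendsto (fun i => g (φ i) (u n (φ i))) atTop (𝓝 (L n)) := by
    intro n
    have := tendsto_pi_nhds.1 haL n
    simpa [Function.comp] using this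
  -- key equicontinuity estimate along the subsequence
  have E : ∀ R > (0:ℝ), ∀ ε > (0:ℝ), ∃ η > (0:ℝ),
      ∀ (y y' : Y), dist y₀ y < R → dist y₀ y' < R → dist y y' < η →
      ∀ (x x' : ∀ i, X (φ i)),
        Tendsto (fun i => (δ (φ i)).d (.inl (x i)) (.inr y)) atTop (𝓝 0) →
        Tendsto (fun i => (δ (φ i)).d (.inl (x' i)) (.inr y')) atTop (𝓝 0) →
        ∀ᶠ i in atTop, dist (g (φ i) (x i)) (g (φ i) (x' i)) < ε := by
    intro R hR ε hε
    obtain ⟨η, hη, hmod⟩ := hequi (R + 1) (by linarith) ε hε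
    refine ⟨η/3, by linarith, fun y y' hy hy' hyy' x x' hx hx' => ?_⟩
    have hbφ : Tendsto (fun i => (δ (φ i)).d (.inl (x₀ (φ i))) (.inr y₀)) atTop (𝓝 0) :=
      hbase.comp hφat
    have hsmall : (0:ℝ) < min (1/2) (η/3) := lt_min (by norm_num) (by linarith)
    filter_upwards [hbφ.eventually_lt_const (show (0:ℝ) < 1/2 by norm_num),
      hx.eventually_lt_const hsmall, hx'.eventually_lt_const hsmall] with i hb hxi hxi'
    obtain ⟨hxi1, hxi2⟩ := lt_min_iff.1 hxi
    obtain ⟨hxi1', hxi2'⟩ := lt_min_iff.1 hxi'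
    set j := φ i
    have hxr : dist (x₀ j) (x i) < R + 1 := by
      have l1 := (δ j).left (x₀ j) (x i)
      have t1 := (δ j).triangle (Sum.inl (x₀ j)) (Sum.inr y₀) (Sum.inl (x i))
      have t2 := (δ j).triangle (Sum.inr y₀) (Sum.inr y) (Sum.inl (x i))
      have r1 := (δ j).right y₀ y
      have s1 := (δ j).symm (Sum.inr y) (Sum.inl (x i))
      rw [← l1]; linarith
    have hxr' : dist (x₀ j) (x' i) < R + 1 := by
      have l1 := (δ j).left (x₀ j) (x' i)
      have t1 := (δ j).triangle (Sum.inl (x₀ j)) (Sum.inr y₀) (Sum.inl (x' i))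
      have t2 := (δ j).triangle (Sum.inr y₀) (Sum.inr y') (Sum.inl (x' i))
      have r1 := (δ j).right y₀ y'
      have s1 := (δ j).symm (Sum.inr y') (Sum.inl (x' i))
      rw [← l1]; linarith
    have hdist : dist (x i) (x' i) < η := by
      have l1 := (δ j).left (x i) (x' i)
      have t1 := (δ j).triangle (Sum.inl (x i)) (Sum.inr y) (Sum.inl (x' i))
      have t2 := (δ j).triangle (Sum.inr y) (Sum.inr y') (Sum.inl (x' i))
      have r1 := (δ j).right y y'
      have s1 := (δ j).symm (Sum.inr y') (Sum.inl (x' i))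
      rw [← l1]; linarith
    exact hmod j (x i) (x' i) hxr hxr' hdist
  -- estimate on the limit values L
  have hL : ∀ R > (0:ℝ), ∀ ε > (0:ℝ), ∃ η > (0:ℝ), ∀ n m : ℕ,
      dist y₀ (D n) < R → dist y₀ (D m) < R → dist (D n) (D m) < η →
      dist (L n) (L m) ≤ ε := by
    intro R hR ε hε
    obtain ⟨η, hη, hE⟩ := E R hR ε hε
    refine ⟨η, hη, fun n m h1 h2 h3 => ?_⟩
    have hev := hE (D n) (D m) h1 h2 h3 (fun i => u n (φ i)) (fun i => u m (φ i))
      ((hu n).comp hφat) ((hu m).comp hφat)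
    have hten : Tendsto (fun i => dist (g (φ i) (u n (φ i))) (g (φ i) (u m (φ i))))
        atTop (𝓝 (dist (L n) (L m))) := (hGL n).dist (hGL m)
    exact le_of_tendsto hten (hev.mono fun i hi => hi.le)
  -- choose approximating indices from the dense set
  have hσ : ∀ (y : Y) (k : ℕ), ∃ n, dist y (D n) < 1/((k:ℝ)+1) := by
    intro y k
    exact hD.exists_dist_lt y (by positivity)
  choose σ hσ using hσ
  have hfrac_le_one : ∀ k : ℕ, 1/((k:ℝ)+1) ≤ 1 := by
    intro k
    rw [div_le_one (by positivity)]
    have : (0:ℝ) ≤ (k:ℝ) := Nat.cast_nonneg k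
    linarith
  -- the sequence L (σ y k) is Cauchy
  have hcauchy : ∀ y : Y, CauchySeq (fun k => L (σ y k)) := by
    intro y
    rw [Metric.cauchySeq_iff]
    intro ε hε
    obtain ⟨η, hη, hLest⟩ := hL (dist y₀ y + 1) (by positivity) (ε/2) (by linarith)
    obtain ⟨K, hK⟩ := eventually_atTop.1
      (tendsto_one_div_add_atTop_nhds_zero_nat.eventually_lt_const
        (show (0:ℝ) < η/2 by linarith))
    refine ⟨K, fun k hk l hl => ?_⟩
    have d1 := hσ y k
    have d2 := hσ y l
    have hrk : dist y₀ (D (σ y k)) < dist y₀ y + 1 := by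
      have := dist_triangle y₀ y (D (σ y k))
      linarith [hfrac_le_one k]
    have hrl : dist y₀ (D (σ y l)) < dist y₀ y + 1 := by
      have := dist_triangle y₀ y (D (σ y l))
      linarith [hfrac_le_one l]
    have hdd : dist (D (σ y k)) (D (σ y l)) < η := by
      have t := dist_triangle (D (σ y k)) y (D (σ y l))
      have c := dist_comm (D (σ y k)) y
      linarith [hK k hk, hK l hl]
    have := hLest (σ y k) (σ y l) hrk hrl hdd
    linarith
  -- define G as the limit
  have hGex : ∀ y : Y, ∃ z : Z, Tendsto (fun k => L (σ y k)) atTop (𝓝 z) :=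
    fun y => cauchySeq_tendsto_of_complete (hcauchy y)
  choose G hG using hGex
  -- main convergence property
  have main : ∀ (y : Y) (x : ∀ i, X (φ i)),
      Tendsto (fun i => (δ (φ i)).d (.inl (x i)) (.inr y)) atTop (𝓝 0) →
      Tendsto (fun i => g (φ i) (x i)) atTop (𝓝 (G y)) := by
    intro y x hx
    refine Metric.tendsto_atTop.2 fun ε hε => ?_
    obtain ⟨η, hη, hE⟩ := E (dist y₀ y + 1) (by positivity) (ε/3) (by linarith)
    have hev1 : ∀ᶠ k : ℕ in atTop, 1/((k:ℝ)+1) < min η 1 :=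
      tendsto_one_div_add_atTop_nhds_zero_nat.eventually_lt_const
        (lt_min hη one_pos)
    have hev2 : ∀ᶠ k in atTop, dist (L (σ y k)) (G y) < ε/3 := by
      have := Metric.tendsto_atTop.1 (hG y) (ε/3) (by linarith)
      obtain ⟨N, hN⟩ := this
      exact eventually_atTop.2 ⟨N, hN⟩
    obtain ⟨k, hk1, hk2⟩ := (hev1.and hev2).exists
    set n := σ y k with hn
    have hyn : dist y (D n) < min η 1 := lt_trans (hσ y k) hk1
    have hry : dist y₀ y < dist y₀ y + 1 := by linarith
    have hrn : dist y₀ (D n) < dist y₀ y + 1 := by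
      have := dist_triangle y₀ y (D n)
      have := lt_min_iff.1 hyn
      linarith [this.2]
    have hyyn : dist y (D n) < η := lt_of_lt_of_le hyn (min_le_left _ _)
    have hev3 := hE y (D n) hry hrn hyyn x (fun i => u n (φ i)) hx ((hu n).comp hφat)
    have hev4 : ∀ᶠ i in atTop, dist (g (φ i) (u n (φ i))) (L n) < ε/3 := by
      obtain ⟨N, hN⟩ := Metric.tendsto_atTop.1 (hGL n) (ε/3) (by linarith)
      exact eventually_atTop.2 ⟨N, hN⟩
    have hfin : ∀ᶠ i in atTop, dist (g (φ i) (x i)) (G y) < ε := by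
      filter_upwards [hev3, hev4] with i h3 h4
      have t := dist_triangle4 (g (φ i) (x i)) (g (φ i) (u n (φ i))) (L n) (G y)
      have : dist (L n) (G y) < ε/3 := hk2
      linarith
    exact eventually_atTop.1 hfin
  -- continuity of G
  have hcont : Continuous G := by
    rw [Metric.continuous_iff]
    intro y ε hε
    obtain ⟨η, hη, hLest⟩ := hL (dist y₀ y + 2) (by positivity) (ε/3) (by linarith)
    refine ⟨min (η/3) 1, lt_min (by linarith) one_pos, fun y' hy' => ?_⟩
    obtain ⟨hy'1, hy'2⟩ := lt_min_iff.1 hy'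
    have hev1 : ∀ᶠ k : ℕ in atTop, 1/((k:ℝ)+1) < η/3 :=
      tendsto_one_div_add_atTop_nhds_zero_nat.eventually_lt_const (by linarith)
    have hev2 : ∀ᶠ k in atTop, dist (L (σ y k)) (G y) < ε/3 := by
      obtain ⟨N, hN⟩ := Metric.tendsto_atTop.1 (hG y) (ε/3) (by linarith)
      exact eventually_atTop.2 ⟨N, hN⟩
    have hev3 : ∀ᶠ k in atTop, dist (L (σ y' k)) (G y') < ε/3 := by
      obtain ⟨N, hN⟩ := Metric.tendsto_atTop.1 (hG y') (ε/3) (by linarith)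
      exact eventually_atTop.2 ⟨N, hN⟩
    obtain ⟨k, ⟨hk1, hk2⟩, hk3⟩ := ((hev1.and hev2).and hev3).exists
    have dyk := hσ y k
    have dy'k := hσ y' k
    have hr1 : dist y₀ (D (σ y' k)) < dist y₀ y + 2 := by
      have t1 := dist_triangle y₀ y' (D (σ y' k))
      have t2 := dist_triangle y₀ y y'
      have c1 := dist_comm y' y
      linarith [hfrac_le_one k]
    have hr2 : dist y₀ (D (σ y k)) < dist y₀ y + 2 := by
      have t := dist_triangle y₀ y (D (σ y k))
      linarith [hfrac_le_one k]
    have hdd : dist (D (σ y' k)) (D (σ y k)) < η := by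
      have t := dist_triangle4 (D (σ y' k)) y' y (D (σ y k))
      have c1 := dist_comm (D (σ y' k)) y'
      linarith
    have hmid := hLest (σ y' k) (σ y k) hr1 hr2 hdd
    have t := dist_triangle4 (G y') (L (σ y' k)) (L (σ y k)) (G y)
    have c1 := dist_comm (G y') (L (σ y' k))
    linarith
  exact ⟨φ, hφ, G, hcont, main⟩
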